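/- arXiv:2209.06064 — 4 statements merged into one kernel-verified Lean document; each statement's English description precedes it below -/
import Mathlib

section
/- Set c := 1 − (9·M₀²·Λ)^{1/3}. For every r > 0 with G(r) > 0 and every t ∈ [−1, 1], one has t²·(1 − G(r)/(2c))² < 1; consequently (t²·(1 − G(r)/(2c))² − 1)/G(r) < 0. -/
/-- With `c = 1 - (9 M₀² Λ)^(1/3)`, for every `r > 0` with `G(r) > 0` and every
`t ∈ [-1,1]`, one has `t² (1 - G(r)/(2c))² < 1`, and hence
`(t² (1 - G(r)/(2c))² - 1)/G(r) < 0`, where `G(r) = 1 - Λ r²/3 - 2 M₀/r`. -/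
theorem stmt_3 (M₀ Λ : ℝ) (hM : 0 < M₀) (hΛ : 0 < Λ) (hΛ' : Λ < 1 / (9 * M₀ ^ 2)) :
    ∀ r : ℝ, 0 < r → 0 < 1 - Λ * r ^ 2 / 3 - 2 * M₀ / r →
    ∀ t ∈ Set.Icc (-1 : ℝ) 1,
      t ^ 2 * (1 - (1 - Λ * r ^ 2 / 3 - 2 * M₀ / r) /
          (2 * (1 - (9 * M₀ ^ 2 * Λ) ^ ((1 : ℝ) / 3)))) ^ 2 < 1 ∧
      (t ^ 2 * (1 - (1 - Λ * r ^ 2 / 3 - 2 * M₀ / r) /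
          (2 * (1 - (9 * M₀ ^ 2 * Λ) ^ ((1 : ℝ) / 3)))) ^ 2 - 1) /
        (1 - Λ * r ^ 2 / 3 - 2 * M₀ / r) < 0 := by
  intro r hr hG t ht
  set a : ℝ := (9 * M₀ ^ 2 * Λ) ^ ((1 : ℝ) / 3) with ha
  have hx : (0:ℝ) < 9 * M₀ ^ 2 * Λ := by positivity
  have hx1 : 9 * M₀ ^ 2 * Λ < 1 := by
    have h9 : (0:ℝ) < 9 * M₀ ^ 2 := by positivity
    rw [lt_div_iff₀ h9] at hΛ'
    nlinarith
  have ha0 : 0 < a := Real.rpow_pos_of_pos hx _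
  have ha1 : a < 1 := Real.rpow_lt_one (le_of_lt hx) hx1 (by norm_num)
  have ha3 : a ^ 3 = 9 * M₀ ^ 2 * Λ := by
    rw [ha, ← Real.rpow_natCast ((9 * M₀ ^ 2 * Λ) ^ ((1:ℝ)/3)) 3,
      ← Real.rpow_mul (le_of_lt hx)]
    norm_num
  set G : ℝ := 1 - Λ * r ^ 2 / 3 - 2 * M₀ / r with hGdef
  -- AM-GM: a ≤ Λ r²/3 + 2 M₀/r, i.e. G ≤ 1 - a
  have hGa : G ≤ 1 - a := by
    have h1 : a * r ≤ Λ * r ^ 3 / 3 + 2 * M₀ := by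
      have hpos : 0 ≤ a * r + 6 * M₀ := by positivity
      have hkey : 0 ≤ (a * r - 3 * M₀) ^ 2 * (a * r + 6 * M₀) :=
        mul_nonneg (sq_nonneg _) hpos
      have h3r : a ^ 3 * r ^ 3 = 9 * M₀ ^ 2 * Λ * r ^ 3 := by rw [ha3]
      nlinarith [hkey, h3r, mul_pos hM hM, sq_nonneg M₀]
    have h2 : 2 * M₀ / r = 2 * M₀ * r⁻¹ := by ring
    rw [hGdef]
    rw [div_eq_mul_inv (2 * M₀) r]
    have hrinv : 0 < r⁻¹ := inv_pos.mpr hr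
    nlinarith [mul_le_mul_of_nonneg_right h1 (le_of_lt hrinv),
      mul_inv_cancel₀ (ne_of_gt hr)]
  have hc0 : 0 < 1 - a := by
    have : 0 < G := hG
    linarith
  set c : ℝ := 1 - a with hc
  set q : ℝ := 1 - G / (2 * c) with hq
  have hGc : G / (2 * c) ≤ 1 / 2 := by
    rw [div_le_div_iff₀ (by positivity) (by norm_num)]
    linarith
  have hGc0 : 0 < G / (2 * c) := by positivity
  have hq1 : q < 1 := by rw [hq]; linarith
  have hq0 : 0 ≤ q := by rw [hq]; linarith
  have hqsq : q ^ 2 < 1 := by nlinarith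
  have ht2 : t ^ 2 ≤ 1 := by
    obtain ⟨h1, h2⟩ := ht
    nlinarith
  have hmain : t ^ 2 * q ^ 2 < 1 :=
    lt_of_le_of_lt (by nlinarith [sq_nonneg t, sq_nonneg q]) hqsq
  exact ⟨hmain, div_neg_of_neg_of_pos (by linarith) hG⟩
end

section
/- Let H₁, H₂, H₃ be complex Banach spaces, let λ₀ ∈ ℂ, let B₁ : ℂ → L(H₂, H₃) and B₂ : ℂ → L(H₁, H₂) be analytic at λ₀, let M ∈ ℕ, let P₁, …, P_M be bounded operators on H₂ each of whose range has dimension at most 1, and let k₁, …, k_M be positive integers. Then there exists ε₀ > 0 such that for every ε ∈ (0, ε₀), the operator (1/(2πi)) · ∮_{|μ−λ₀|=ε} B₁(μ) ∘ ( Σ_{m=1}^{M} (μ−λ₀)^{−k_m} · P_m ) ∘ B₂(μ) dμ (the integral over the positively oriented circle of center λ₀ and radius ε) is a bounded operator from H₁ to H₃ whose range has dimension at most k₁ + ⋯ + k_M. -/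
/-! Write each rank-one `P m` as `y ↦ f m y • v m`. Applied to a vector `x`, the `m`-th term of
the integrand becomes `(μ - λ₀) ^ (-k m) • f m (B₂ μ x) • B₁ μ (v m)`. Expanding `μ ↦ B₁ μ (v m)`
to order `k m` at `λ₀` by iterated `dslope`, the remainder term is holomorphic inside the circle
and integrates to zero by Cauchy's theorem, while the other `k m` terms are scalar multiples of
the Taylor coefficients `(swap dslope λ₀)^[l] (B₁ · (v m)) λ₀`, `l < k m`. Hence the range of the
residue lies in the span of `∑ m, k m` fixed vectors. -/

open Set Metric Function Topology Complex

theorem ContinuousLinearMap.exists_eq_smulRight_of_rank_range_le_one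
    {𝕜 E F : Type*} [NormedField 𝕜] [NormedAddCommGroup E] [NormedSpace 𝕜 E]
    [NormedAddCommGroup F] [NormedSpace 𝕜 F] (P : E →L[𝕜] F)
    (hP : Module.rank 𝕜 (LinearMap.range (P : E →ₗ[𝕜] F)) ≤ 1) :
    ∃ (f : StrongDual 𝕜 E) (v : F), P = f.smulRight v := by
  obtain ⟨v, hv⟩ := (Submodule.rank_le_one_iff_isPrincipal _).1 hP
  have hmem : ∀ y, P y ∈ 𝕜 ∙ v := fun y => hv ▸ LinearMap.mem_range_self _ y
  rcases eq_or_ne v 0 with rfl | hv0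
  · refine ⟨0, 0, ext fun y => ?_⟩
    simpa using hmem y
  · refine ⟨(ContinuousLinearEquiv.coord 𝕜 v hv0).comp (P.codRestrict _ hmem), v, ext fun y => ?_⟩
    exact (LinearEquiv.coord_apply_smul 𝕜 F v hv0 ⟨P y, hmem y⟩).symm

theorem sum_pow_smul_iterate_dslope_add {𝕜 E : Type*} [NontriviallyNormedField 𝕜]
    [NormedAddCommGroup E] [NormedSpace 𝕜 E] (f : 𝕜 → E) (a : 𝕜) (n : ℕ) (z : 𝕜) :
    (∑ l ∈ Finset.range n, (z - a) ^ l • (swap dslope a)^[l] f a)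
      + (z - a) ^ n • (swap dslope a)^[n] f z = f z := by
  induction n with
  | zero => simp
  | succ n ih =>
    rw [Finset.sum_range_succ, iterate_succ_apply', pow_succ, mul_smul, sub_smul_dslope,
      smul_sub, add_assoc, add_sub_cancel, ih]

theorem sub_zpow_smul_smul_eq_sum_add {𝕜 E : Type*} [NontriviallyNormedField 𝕜]
    [NormedAddCommGroup E] [NormedSpace 𝕜 E] (g : 𝕜 → E) (k : ℕ) (a : 𝕜) {z c : 𝕜}
    (hz : z - c ≠ 0) :
    (z - c) ^ (-(k : ℤ)) • a • g z
      = (∑ l ∈ Finset.range k, ((z - c) ^ ((l : ℤ) - k) * a) • (swap dslope c)^[l] g c)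
        + a • (swap dslope c)^[k] g z := by
  rw [← sum_pow_smul_iterate_dslope_add g c k z, smul_add, smul_add, Finset.smul_sum,
    Finset.smul_sum]
  congr 1
  · refine Finset.sum_congr rfl fun l _ => ?_
    rw [smul_smul, smul_smul, zpow_sub₀ hz, zpow_neg, zpow_natCast, zpow_natCast]
    congr 1
    ring
  · rw [smul_smul, smul_smul, zpow_neg, zpow_natCast, mul_right_comm,
      inv_mul_cancel₀ (pow_ne_zero _ hz), one_mul]

theorem DifferentiableOn.iterate_dslope {E : Type*} [NormedAddCommGroup E] [NormedSpace ℂ E]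
    [CompleteSpace E] {f : ℂ → E} {s : Set ℂ} {a : ℂ} (hs : s ∈ 𝓝 a)
    (hf : DifferentiableOn ℂ f s) (n : ℕ) :
    DifferentiableOn ℂ ((swap dslope a)^[n] f) s := by
  induction n with
  | zero => exact hf
  | succ n ih => rw [iterate_succ_apply']; exact (differentiableOn_dslope hs).2 ih

theorem continuousOn_sub_zpow_sphere {c : ℂ} {R : ℝ} (hR : R ≠ 0) (n : ℤ) :
    ContinuousOn (fun z => (z - c) ^ n) (sphere c R) :=
  (continuousOn_id.sub continuousOn_const).zpow₀ n fun _ hz =>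
    Or.inl (sub_ne_zero.2 (ne_of_mem_sphere hz hR))

theorem circleIntegral_sub_zpow_smul_smul_eq_sum {E : Type*} [NormedAddCommGroup E]
    [NormedSpace ℂ E] [CompleteSpace E] {U : Set ℂ} (hU : IsOpen U) {c : ℂ} {R : ℝ} (hR : 0 < R)
    (hRU : closedBall c R ⊆ U) {φ : ℂ → ℂ} {g : ℂ → E} (hφ : DifferentiableOn ℂ φ U)
    (hg : DifferentiableOn ℂ g U) (k : ℕ) :
    (∮ z in C(c, R), (z - c) ^ (-(k : ℤ)) • φ z • g z)
      = ∑ l ∈ Finset.range k,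
          (∮ z in C(c, R), (z - c) ^ ((l : ℤ) - k) * φ z) • (swap dslope c)^[l] g c := by
  have hc : U ∈ 𝓝 c := hU.mem_nhds (hRU (mem_closedBall_self hR.le))
  have hsub : sphere c R ⊆ U := sphere_subset_closedBall.trans hRU
  set rem : ℂ → E := fun z => φ z • (swap dslope c)^[k] g z
  have hrem : DifferentiableOn ℂ rem U := hφ.smul (hg.iterate_dslope hc k)
  have hexpand : EqOn (fun z => (z - c) ^ (-(k : ℤ)) • φ z • g z)
      (fun z => (∑ l ∈ Finset.range k,
        ((z - c) ^ ((l : ℤ) - k) * φ z) • (swap dslope c)^[l] g c) + rem z) (sphere c R) :=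
    fun z hz =>
      sub_zpow_smul_smul_eq_sum_add g k (φ z) (sub_ne_zero.2 (ne_of_mem_sphere hz hR.ne'))
  have hint : ∀ l ∈ Finset.range k, CircleIntegrable
      (fun z => ((z - c) ^ ((l : ℤ) - k) * φ z) • (swap dslope c)^[l] g c) c R :=
    fun l _ => (((continuousOn_sub_zpow_sphere hR.ne' _).mul (hφ.continuousOn.mono hsub)).smul
      continuousOn_const).circleIntegrable hR.le
  have hCauchy : (∮ z in C(c, R), rem z) = 0 :=
    (hrem.diffContOnCl_ball hRU).circleIntegral_eq_zero hR.le
  rw [circleIntegral.integral_congr hR.le hexpand, circleIntegral.integral_add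
      (CircleIntegrable.fun_sum _ hint) ((hrem.continuousOn.mono hsub).circleIntegrable hR.le),
    hCauchy, add_zero, circleIntegral.integral_fun_sum hint]
  exact Finset.sum_congr rfl fun l _ => circleIntegral.integral_smul_const _ _ _ _

theorem ContinuousLinearMap.circleIntegral_apply {E F : Type*} [NormedAddCommGroup E]
    [NormedSpace ℂ E] [NormedAddCommGroup F] [NormedSpace ℂ F] {φ : ℂ → F →L[ℂ] E} {c : ℂ}
    {R : ℝ} (hφ : CircleIntegrable φ c R) (v : F) :
    (∮ z in C(c, R), φ z) v = ∮ z in C(c, R), φ z v :=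
  ContinuousLinearMap.intervalIntegral_apply hφ.out v

theorem rank_span_range_sigma_le {R M ι : Type*} [Ring R] [StrongRankCondition R]
    [AddCommGroup M] [Module R M] [Fintype ι] {k : ι → ℕ} (w : (Σ i, Fin (k i)) → M) :
    Module.rank R (Submodule.span R (range w)) ≤ ((∑ i, k i : ℕ) : Cardinal) := by
  classical
  calc _ ≤ Cardinal.mk (range w) := rank_span_le _
    _ ≤ Fintype.card (Σ i, Fin (k i)) := by
      rw [Cardinal.mk_fintype]; exact_mod_cast Fintype.card_range_le w
    _ = _ := by rw [Fintype.card_sigma]; simp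

theorem range_circleIntegral_le_span_iterate_dslope {E₁ E₂ E₃ ι : Type*}
    [NormedAddCommGroup E₁] [NormedSpace ℂ E₁] [NormedAddCommGroup E₂] [NormedSpace ℂ E₂]
    [NormedAddCommGroup E₃] [NormedSpace ℂ E₃] [CompleteSpace E₃] [Fintype ι]
    {U : Set ℂ} (hU : IsOpen U) {c : ℂ} {R : ℝ} (hR : 0 < R) (hRU : closedBall c R ⊆ U)
    {B₁ : ℂ → E₂ →L[ℂ] E₃} {B₂ : ℂ → E₁ →L[ℂ] E₂} (hB₁ : DifferentiableOn ℂ B₁ U)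
    (hB₂ : DifferentiableOn ℂ B₂ U) (f : ι → StrongDual ℂ E₂) (v : ι → E₂) (k : ι → ℕ) :
    LinearMap.range ((∮ μ in C(c, R),
        ((B₁ μ).comp (∑ m, (μ - c) ^ (-(k m : ℤ)) • (f m).smulRight (v m))).comp (B₂ μ) :
        E₁ →L[ℂ] E₃) : E₁ →ₗ[ℂ] E₃)
      ≤ Submodule.span ℂ
          (range fun i : Σ m, Fin (k m) => (swap dslope c)^[i.2] (fun μ => B₁ μ (v i.1)) c) := by
  have hsphere : sphere c R ⊆ U := sphere_subset_closedBall.trans hRU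
  have hcont : ContinuousOn
      (fun μ => ((B₁ μ).comp (∑ m, (μ - c) ^ (-(k m : ℤ)) • (f m).smulRight (v m))).comp (B₂ μ))
      (sphere c R) :=
    ((hB₁.continuousOn.mono hsphere).clm_comp (continuousOn_finsetSum _ fun m _ =>
      (continuousOn_sub_zpow_sphere hR.ne' _).smul continuousOn_const)).clm_comp
      (hB₂.continuousOn.mono hsphere)
  rintro _ ⟨x, rfl⟩
  have hφ : ∀ m, DifferentiableOn ℂ (fun μ => f m (B₂ μ x)) U := fun m =>
    (f m).differentiable.comp_differentiableOn (hB₂.clm_apply (differentiableOn_const x))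
  have hg : ∀ m, DifferentiableOn ℂ (fun μ => B₁ μ (v m)) U := fun m =>
    hB₁.clm_apply (differentiableOn_const (v m))
  have hint : ∀ m ∈ Finset.univ, CircleIntegrable
      (fun μ => (μ - c) ^ (-(k m : ℤ)) • f m (B₂ μ x) • B₁ μ (v m)) c R := fun m _ =>
    ((continuousOn_sub_zpow_sphere hR.ne' _).smul
      (((hφ m).smul (hg m)).continuousOn.mono hsphere)).circleIntegrable hR.le
  simp only [ContinuousLinearMap.coe_coe, ContinuousLinearMap.circleIntegral_apply
      (hcont.circleIntegrable hR.le), ContinuousLinearMap.comp_apply,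
    sum_apply, smul_apply, ContinuousLinearMap.smulRight_apply, map_sum,
    map_smul, circleIntegral.integral_fun_sum hint,
    circleIntegral_sub_zpow_smul_smul_eq_sum hU hR hRU (hφ _) (hg _)]
  exact Submodule.sum_mem _ fun m _ => Submodule.sum_mem _ fun l hl =>
    Submodule.smul_mem _ _ (Submodule.subset_span ⟨⟨m, l, Finset.mem_range.1 hl⟩, rfl⟩)

theorem stmt_8_general {H₁ H₂ H₃ : Type*}
    [NormedAddCommGroup H₁] [NormedSpace ℂ H₁]
    [NormedAddCommGroup H₂] [NormedSpace ℂ H₂] [CompleteSpace H₂]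
    [NormedAddCommGroup H₃] [NormedSpace ℂ H₃] [CompleteSpace H₃]
    (lam₀ : ℂ) (B₁ : ℂ → (H₂ →L[ℂ] H₃)) (B₂ : ℂ → (H₁ →L[ℂ] H₂))
    (hB₁ : AnalyticAt ℂ B₁ lam₀) (hB₂ : AnalyticAt ℂ B₂ lam₀)
    (M : ℕ) (P : Fin M → (H₂ →L[ℂ] H₂))
    (hP : ∀ m, Module.rank ℂ (LinearMap.range (P m : H₂ →ₗ[ℂ] H₂)) ≤ 1)
    (k : Fin M → ℕ) :
    ∃ ε₀ > (0 : ℝ), ∀ ε ∈ Set.Ioo (0 : ℝ) ε₀,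
      Module.rank ℂ (LinearMap.range
        ((((2 * (Real.pi : ℂ) * Complex.I)⁻¹ •
          (∮ μ in C(lam₀, ε),
            ((B₁ μ).comp (∑ m, ((μ - lam₀) ^ (-(k m : ℤ))) • P m)).comp (B₂ μ)) :
          H₁ →L[ℂ] H₃) : H₁ →ₗ[ℂ] H₃)))
      ≤ ((∑ m, k m : ℕ) : Cardinal) := by
  choose f v hfv using fun m => (P m).exists_eq_smulRight_of_rank_range_le_one (hP m)
  obtain rfl : P = fun m => (f m).smulRight (v m) := funext hfv
  obtain ⟨δ, hδ, hB⟩ := Metric.eventually_nhds_iff_ball.1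
    (hB₁.eventually_analyticAt.and hB₂.eventually_analyticAt)
  refine ⟨δ, hδ, fun ε ⟨hε, hεδ⟩ => ?_⟩
  have hspan := range_circleIntegral_le_span_iterate_dslope isOpen_ball hε
    (closedBall_subset_ball hεδ) (fun z hz => (hB z hz).1.differentiableWithinAt)
    (fun z hz => (hB z hz).2.differentiableWithinAt) f v k
  rw [ContinuousLinearMap.toLinearMap_smul]
  exact (Submodule.rank_mono ((LinearMap.range_smul_le_range _ _).trans hspan)).trans
    (rank_span_range_sigma_le _)

/-- Gohberg–Sigal residue rank bound: if `B₁`, `B₂` are operator-valued maps analytic at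
`λ₀`, `P₁, …, P_M` have rank at most one, and `k₁, …, k_M > 0`, then for all small
`ε > 0` the operator `(2πi)⁻¹ ∮_{|μ-λ₀|=ε} B₁(μ) (Σ_m (μ-λ₀)^{-k_m} P_m) B₂(μ) dμ`
has range of dimension at most `k₁ + ⋯ + k_M`. -/
theorem stmt_8 {H₁ H₂ H₃ : Type*}
    [NormedAddCommGroup H₁] [NormedSpace ℂ H₁] [CompleteSpace H₁]
    [NormedAddCommGroup H₂] [NormedSpace ℂ H₂] [CompleteSpace H₂]
    [NormedAddCommGroup H₃] [NormedSpace ℂ H₃] [CompleteSpace H₃]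
    (lam₀ : ℂ) (B₁ : ℂ → (H₂ →L[ℂ] H₃)) (B₂ : ℂ → (H₁ →L[ℂ] H₂))
    (hB₁ : AnalyticAt ℂ B₁ lam₀) (hB₂ : AnalyticAt ℂ B₂ lam₀)
    (M : ℕ) (P : Fin M → (H₂ →L[ℂ] H₂))
    (hP : ∀ m, Module.rank ℂ (LinearMap.range (P m : H₂ →ₗ[ℂ] H₂)) ≤ 1)
    (k : Fin M → ℕ) (hk : ∀ m, 0 < k m) :
    ∃ ε₀ > (0 : ℝ), ∀ ε ∈ Set.Ioo (0 : ℝ) ε₀,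
      Module.rank ℂ (LinearMap.range
        ((((2 * (Real.pi : ℂ) * Complex.I)⁻¹ •
          (∮ μ in C(lam₀, ε),
            ((B₁ μ).comp (∑ m, ((μ - lam₀) ^ (-(k m : ℤ))) • P m)).comp (B₂ μ)) :
          H₁ →L[ℂ] H₃) : H₁ →ₗ[ℂ] H₃)))
      ≤ ((∑ m, k m : ℕ) : Cardinal) :=
  stmt_8_general lam₀ B₁ B₂ hB₁ hB₂ M P hP k
end

section
/- Let n ≥ 2 and ε > 0. Let w : (−ε, ε) → ℝ be continuously differentiable with w'(x₁) ≥ ε for all x₁ ∈ (−ε, ε). Let q₁ : (−ε, ε) × ℝ^{n−1} × ℝ^{n−1} → ℝ, (x₁, x', ξ') ↦ q₁(x₁, x', ξ'), be continuously differentiable, and assume there is C₀ > 0 such that for all (x₁, x', ξ'): |∂_{x₁} q₁(x₁, x', ξ')| ≤ C₀·(1 + |ξ'|²) and |∇_{x'} q₁(x₁, x', ξ')| ≤ C₀·(1 + |ξ'|²). Then there exist ε₁ ∈ (0, ε) and C > 0 such that for every (x₁, x', ξ₁, ξ') with x₁ ∈ (−ε, ε), ξ₁ ∈ ℝ, and |ξ₁|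 ≥ ε₁^{−1}·(1 + |ξ'|), one has (1/ξ₁) · [ 2ξ₁·( w'(x₁)·ξ₁² + ∂_{x₁} q₁(x₁, x', ξ') ) + 2·⟨ξ', ∇_{x'} q₁(x₁, x', ξ')⟩ ] / (2 + ξ₁² + |ξ'|²) ≥ 1/C. -/
/-!
On the region `|ξ₁| ≥ ε₁⁻¹(1 + |ξ'|)` we have `1 + |ξ'|² ≤ ε₁²ξ₁²` and `|ξ'| ≤ |ξ₁|`, so the
quadratic-growth bounds on `∂_{x₁}q₁` and `∇_{x'}q₁` make each of the two error terms of
`ξ₁ · [2ξ₁(w'ξ₁² + ∂_{x₁}q₁) + 2⟨ξ', ∇_{x'}q₁⟩]` at most `2C₀ε₁²ξ₁⁴` in size, while the leading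
term is `2w'ξ₁⁴ ≥ 2εξ₁⁴`. Taking `4C₀ε₁² ≤ ε` leaves `εξ₁⁴`; since the denominator is at most
`4ξ₁²`, the quotient is at least `ε/4`.
-/

open Filter Topology

lemma eventually_lt_and_le_one_and_mul_sq_le {ε : ℝ} (hε : 0 < ε) (C : ℝ) :
    ∀ᶠ δ in 𝓝[>] (0 : ℝ), δ < ε ∧ δ ≤ 1 ∧ 4 * C * δ ^ 2 ≤ ε := by
  have hsq : Tendsto (fun δ : ℝ => 4 * C * δ ^ 2) (𝓝[>] 0) (𝓝 0) := by
    have : Continuous (fun δ : ℝ => 4 * C * δ ^ 2) := by fun_prop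
    simpa using this.tendsto' 0 _ (by simp) |>.mono_left nhdsWithin_le_nhds
  have hid : Tendsto (fun δ : ℝ => δ) (𝓝[>] 0) (𝓝 0) := nhdsWithin_le_nhds
  exact (hid.eventually_lt_const hε).and
    ((hid.eventually_le_const one_pos).and (hsq.eventually_le_const hε))

section Estimates

variable {ε δ C M W d I x s : ℝ}

lemma one_add_le_abs_of_one_add_le_mul_abs (hδ : δ ≤ 1) (h : 1 + s ≤ δ * |x|) :
    1 + s ≤ |x| := by
  nlinarith [abs_nonneg x]

lemma four_mul_le_mul_sq_of_one_add_le_mul_abs (hs : 0 ≤ s) (h : 1 + s ≤ δ * |x|)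
    (hC : 0 ≤ C) (hCδ : 4 * C * δ ^ 2 ≤ ε) : 4 * (C * (1 + s ^ 2)) ≤ ε * x ^ 2 := by
  have hsq : 1 + s ^ 2 ≤ δ ^ 2 * x ^ 2 := by
    nlinarith [mul_self_le_mul_self (by linarith : (0 : ℝ) ≤ 1 + s) h, sq_abs x]
  calc 4 * (C * (1 + s ^ 2)) ≤ 4 * (C * (δ ^ 2 * x ^ 2)) := by gcongr
    _ = 4 * C * δ ^ 2 * x ^ 2 := by ring
    _ ≤ ε * x ^ 2 := by gcongr

lemma mul_pow_four_le_numerator (hW : ε ≤ W) (hd : |d| ≤ M) (hI : |I| ≤ s * M)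
    (hs : s ≤ |x|) (hM : 4 * M ≤ ε * x ^ 2) :
    ε * x ^ 4 ≤ x * (2 * x * (W * x ^ 2 + d) + 2 * I) := by
  have hM0 : 0 ≤ M := (abs_nonneg d).trans hd
  have hxd : -(x ^ 2 * M) ≤ x ^ 2 * d := by
    nlinarith [neg_abs_le d, sq_nonneg x]
  have hxI : -(x ^ 2 * M) ≤ x * I := by
    have h1 : |x * I| ≤ x ^ 2 * M := by
      rw [abs_mul, ← sq_abs x, sq, mul_assoc]
      exact mul_le_mul_of_nonneg_left (hI.trans (by gcongr)) (abs_nonneg x)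
    linarith [neg_abs_le (x * I)]
  nlinarith [mul_le_mul_of_nonneg_right hW (pow_nonneg (sq_nonneg x) 2)]

lemma add_sq_add_sq_le_four_mul_sq (hx : 1 ≤ |x|) (hs0 : 0 ≤ s) (hs : s ≤ |x|) :
    2 + x ^ 2 + s ^ 2 ≤ 4 * x ^ 2 := by
  nlinarith [mul_self_le_mul_self hs0 hs, sq_abs x]

lemma div_four_le_one_div_mul_div {N D : ℝ} (hε : 0 ≤ ε) (hx : x ≠ 0)
    (hN : ε * x ^ 4 ≤ x * N) (hD : 0 < D) (hDx : D ≤ 4 * x ^ 2) :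
    ε / 4 ≤ 1 / x * (N / D) := by
  rw [show 1 / x * (N / D) = x * N / (x ^ 2 * D) by field_simp, div_le_div_iff₀ (by norm_num)
    (by positivity)]
  calc ε * (x ^ 2 * D) ≤ ε * (x ^ 2 * (4 * x ^ 2)) := by gcongr
    _ = 4 * (ε * x ^ 4) := by ring
    _ ≤ x * N * 4 := by linarith

end Estimates

theorem stmt_9_general (n : ℕ) (ε : ℝ) (hε : 0 < ε)
    (w' : ℝ → ℝ)
    (hw'pos : ∀ x₁ ∈ Set.Ioo (-ε) ε, ε ≤ w' x₁)
    (dq : ℝ → EuclideanSpace ℝ (Fin (n - 1)) → EuclideanSpace ℝ (Fin (n - 1)) → ℝ)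
    (gq : ℝ → EuclideanSpace ℝ (Fin (n - 1)) → EuclideanSpace ℝ (Fin (n - 1)) →
      EuclideanSpace ℝ (Fin (n - 1)))
    (C₀ : ℝ)
    (hbd1 : ∀ x₁ ∈ Set.Ioo (-ε) ε, ∀ x' ξ', |dq x₁ x' ξ'| ≤ C₀ * (1 + ‖ξ'‖ ^ 2))
    (hbd2 : ∀ x₁ ∈ Set.Ioo (-ε) ε, ∀ x' ξ', ‖gq x₁ x' ξ'‖ ≤ C₀ * (1 + ‖ξ'‖ ^ 2)) :
    ∃ ε₁ ∈ Set.Ioo (0 : ℝ) ε, ∃ C > (0 : ℝ),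
      ∀ x₁ ∈ Set.Ioo (-ε) ε, ∀ (x' ξ' : EuclideanSpace ℝ (Fin (n - 1))) (ξ₁ : ℝ),
        ε₁⁻¹ * (1 + ‖ξ'‖) ≤ |ξ₁| →
        1 / C ≤ (1 / ξ₁) *
          ((2 * ξ₁ * (w' x₁ * ξ₁ ^ 2 + dq x₁ x' ξ')
              + 2 * (inner ℝ ξ' (gq x₁ x' ξ') : ℝ)) /
            (2 + ξ₁ ^ 2 + ‖ξ'‖ ^ 2)) := by
  obtain ⟨ε₁, ⟨hε₁ε, hε₁1, hC₀ε₁⟩, hε₁0⟩ :=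
    ((eventually_lt_and_le_one_and_mul_sq_le hε C₀).and self_mem_nhdsWithin).exists
  refine ⟨ε₁, ⟨hε₁0, hε₁ε⟩, 4 / ε, by positivity, ?_⟩
  intro x₁ hx₁ x' ξ' ξ₁ hξ₁
  rw [inv_mul_le_iff₀ hε₁0] at hξ₁
  have hs0 : 0 ≤ ‖ξ'‖ := norm_nonneg ξ'
  have hξ₁abs := one_add_le_abs_of_one_add_le_mul_abs hε₁1 hξ₁
  have hd := hbd1 x₁ hx₁ x' ξ'
  have hC₀ : 0 ≤ C₀ := nonneg_of_mul_nonneg_left ((abs_nonneg _).trans hd) (by positivity)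
  have hinner : |inner ℝ ξ' (gq x₁ x' ξ')| ≤ ‖ξ'‖ * (C₀ * (1 + ‖ξ'‖ ^ 2)) :=
    (abs_real_inner_le_norm _ _).trans (by gcongr; exact hbd2 x₁ hx₁ x' ξ')
  have hξ₁0 : ξ₁ ≠ 0 := by
    rintro rfl
    simp only [abs_zero] at hξ₁abs
    linarith
  rw [one_div_div]
  exact div_four_le_one_div_mul_div hε.le hξ₁0
    (mul_pow_four_le_numerator (hw'pos x₁ hx₁) hd hinner (by linarith)
      (four_mul_le_mul_sq_of_one_add_le_mul_abs hs0 hξ₁ hC₀ hC₀ε₁))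
    (by positivity) (add_sq_add_sq_le_four_mul_sq (by linarith) hs0 (by linarith))

/-- Estimate (6.2): the escape function `G₁ = log(2 + ξ₁² + |ξ'|²)` strictly increases
along the Hamiltonian flow of `p₂ = w(x₁)ξ₁² + q₁(x₁,x',ξ')` in the region where `|ξ₁|`
dominates `|ξ'|`: there are `ε₁ ∈ (0,ε)` and `C > 0` such that
`(1/ξ₁)·[2ξ₁(w'ξ₁² + ∂_{x₁}q₁) + 2⟨ξ', ∇_{x'}q₁⟩]/(2+ξ₁²+|ξ'|²) ≥ 1/C` whenever
`|ξ₁| ≥ ε₁⁻¹(1+|ξ'|)`. -/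
theorem stmt_9 (n : ℕ) (hn : 2 ≤ n) (ε : ℝ) (hε : 0 < ε)
    (w w' : ℝ → ℝ)
    (hw : ∀ x₁ ∈ Set.Ioo (-ε) ε, HasDerivAt w (w' x₁) x₁)
    (hw'cont : ContinuousOn w' (Set.Ioo (-ε) ε))
    (hw'pos : ∀ x₁ ∈ Set.Ioo (-ε) ε, ε ≤ w' x₁)
    (q₁ : ℝ → EuclideanSpace ℝ (Fin (n - 1)) → EuclideanSpace ℝ (Fin (n - 1)) → ℝ)
    (dq : ℝ → EuclideanSpace ℝ (Fin (n - 1)) → EuclideanSpace ℝ (Fin (n - 1)) → ℝ)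
    (gq : ℝ → EuclideanSpace ℝ (Fin (n - 1)) → EuclideanSpace ℝ (Fin (n - 1)) →
      EuclideanSpace ℝ (Fin (n - 1)))
    (hdq : ∀ x₁ ∈ Set.Ioo (-ε) ε, ∀ x' ξ',
      HasDerivAt (fun t => q₁ t x' ξ') (dq x₁ x' ξ') x₁)
    (hgq : ∀ x₁ ∈ Set.Ioo (-ε) ε, ∀ x' ξ',
      HasGradientAt (fun y => q₁ x₁ y ξ') (gq x₁ x' ξ') x')
    (hdqcont : ContinuousOn
      (fun p : ℝ × EuclideanSpace ℝ (Fin (n - 1)) × EuclideanSpace ℝ (Fin (n - 1)) =>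
        dq p.1 p.2.1 p.2.2)
      (Set.Ioo (-ε) ε ×ˢ (Set.univ : Set (EuclideanSpace ℝ (Fin (n - 1)) ×
        EuclideanSpace ℝ (Fin (n - 1))))))
    (hgqcont : ContinuousOn
      (fun p : ℝ × EuclideanSpace ℝ (Fin (n - 1)) × EuclideanSpace ℝ (Fin (n - 1)) =>
        gq p.1 p.2.1 p.2.2)
      (Set.Ioo (-ε) ε ×ˢ (Set.univ : Set (EuclideanSpace ℝ (Fin (n - 1)) ×
        EuclideanSpace ℝ (Fin (n - 1))))))
    (C₀ : ℝ) (hC₀ : 0 < C₀)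
    (hbd1 : ∀ x₁ ∈ Set.Ioo (-ε) ε, ∀ x' ξ', |dq x₁ x' ξ'| ≤ C₀ * (1 + ‖ξ'‖ ^ 2))
    (hbd2 : ∀ x₁ ∈ Set.Ioo (-ε) ε, ∀ x' ξ', ‖gq x₁ x' ξ'‖ ≤ C₀ * (1 + ‖ξ'‖ ^ 2)) :
    ∃ ε₁ ∈ Set.Ioo (0 : ℝ) ε, ∃ C > (0 : ℝ),
      ∀ x₁ ∈ Set.Ioo (-ε) ε, ∀ (x' ξ' : EuclideanSpace ℝ (Fin (n - 1))) (ξ₁ : ℝ),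
        ε₁⁻¹ * (1 + ‖ξ'‖) ≤ |ξ₁| →
        1 / C ≤ (1 / ξ₁) *
          ((2 * ξ₁ * (w' x₁ * ξ₁ ^ 2 + dq x₁ x' ξ')
              + 2 * (inner ℝ ξ' (gq x₁ x' ξ') : ℝ)) /
            (2 + ξ₁ ^ 2 + ‖ξ'‖ ^ 2)) :=
  stmt_9_general n ε hε w' hw'pos dq gq C₀ hbd1 hbd2
end

section
/- Let ρ : ℝ → ℝ be differentiable on (0, ∞) with ρ(t) > 0, ρ'(t) ≥ 0, and t·ρ'(t) ≤ ρ(t) for all t > 0. Then for every x₁ ∈ (0, 1), setting s := 4x₁/(1 + x₁)², the function t ↦ ρ(4t/(1 + t)²) is differentiable at x₁ and 0 ≤ x₁ · (d/dt)[ρ(4t/(1 + t)²)]|_{t = x₁} / ρ(s) ≤ (1 − x₁)/(1 + x₁); in particular this quantity is strictly less than 1. -/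
/-!
With `g t = 4t/(1+t)²` one computes `t g'(t) = g(t) (1-t)/(1+t)`, so by the chain rule
`t (ρ ∘ g)'(t) / ρ(g t) = (s ρ'(s) / ρ(s)) · (1-t)/(1+t)` with `s = g t`. The hypotheses on `ρ`
say exactly that the elasticity `s ρ'(s) / ρ(s)` lies in `[0, 1]`.
-/

theorem hasDerivAt_four_mul_div_one_add_sq {x : ℝ} (hx : 1 + x ≠ 0) :
    HasDerivAt (fun t : ℝ => 4 * t / (1 + t) ^ 2) (4 * (1 - x) / (1 + x) ^ 3) x := by
  have hnum : HasDerivAt (fun t : ℝ => 4 * t) 4 x := by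
    simpa using (hasDerivAt_id x).const_mul 4
  have hden : HasDerivAt (fun t : ℝ => (1 + t) ^ 2) (2 * (1 + x)) x := by
    simpa using ((hasDerivAt_id x).const_add 1).fun_pow 2
  refine (hnum.fun_div hden (pow_ne_zero 2 hx)).congr_deriv ?_
  field_simp
  ring

theorem mul_four_mul_one_sub_div_one_add_pow_three {x : ℝ} (hx : 1 + x ≠ 0) :
    x * (4 * (1 - x) / (1 + x) ^ 3) = 4 * x / (1 + x) ^ 2 * ((1 - x) / (1 + x)) := by
  field_simp

theorem elasticity_comp_mem_Icc {ρ g : ℝ → ℝ} {x g' c : ℝ}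
    (hρ : DifferentiableAt ℝ ρ (g x)) (hg : HasDerivAt g g' x)
    (hg_elast : x * g' = g x * c) (hc : 0 ≤ c) (hgx : 0 ≤ g x)
    (hpos : 0 < ρ (g x)) (hmono : 0 ≤ deriv ρ (g x))
    (hconc : g x * deriv ρ (g x) ≤ ρ (g x)) :
    0 ≤ x * deriv (fun t => ρ (g t)) x / ρ (g x) ∧
      x * deriv (fun t => ρ (g t)) x / ρ (g x) ≤ c := by
  have hchain : x * deriv (fun t => ρ (g t)) x = g x * deriv ρ (g x) * c := by
    have hderiv : deriv (fun t => ρ (g t)) x = deriv ρ (g x) * g' :=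
      (hρ.hasDerivAt.comp x hg).deriv
    rw [hderiv, mul_left_comm, hg_elast]
    ring
  rw [hchain]
  constructor
  · positivity
  · rw [div_le_iff₀ hpos]
    nlinarith

/-- If `ρ` is differentiable on `(0,∞)` with `ρ > 0`, `ρ' ≥ 0` and `t ρ'(t) ≤ ρ(t)`, then
for `x₁ ∈ (0,1)`, with `s = 4x₁/(1+x₁)²`, the function `t ↦ ρ(4t/(1+t)²)` is differentiable
at `x₁` and `0 ≤ x₁ · (d/dt)[ρ(4t/(1+t)²)]|_{x₁} / ρ(s) ≤ (1-x₁)/(1+x₁) < 1`. -/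
theorem stmt_12 (ρ : ℝ → ℝ)
    (hdiff : ∀ t : ℝ, 0 < t → DifferentiableAt ℝ ρ t)
    (hpos : ∀ t : ℝ, 0 < t → 0 < ρ t)
    (hmono : ∀ t : ℝ, 0 < t → 0 ≤ deriv ρ t)
    (hconc : ∀ t : ℝ, 0 < t → t * deriv ρ t ≤ ρ t) :
    ∀ x₁ ∈ Set.Ioo (0 : ℝ) 1,
      DifferentiableAt ℝ (fun t : ℝ => ρ (4 * t / (1 + t) ^ 2)) x₁ ∧
      0 ≤ x₁ * deriv (fun t : ℝ => ρ (4 * t / (1 + t) ^ 2)) x₁ /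
          ρ (4 * x₁ / (1 + x₁) ^ 2) ∧
      x₁ * deriv (fun t : ℝ => ρ (4 * t / (1 + t) ^ 2)) x₁ /
          ρ (4 * x₁ / (1 + x₁) ^ 2) ≤ (1 - x₁) / (1 + x₁) ∧
      x₁ * deriv (fun t : ℝ => ρ (4 * t / (1 + t) ^ 2)) x₁ /
          ρ (4 * x₁ / (1 + x₁) ^ 2) < 1 := by
  rintro x ⟨hx0, hx1⟩
  have hx : 1 + x ≠ 0 := by positivity
  have hs : 0 < 4 * x / (1 + x) ^ 2 := by positivity
  have hg := hasDerivAt_four_mul_div_one_add_sq hx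
  obtain ⟨hlo, hhi⟩ := elasticity_comp_mem_Icc (g := fun t => 4 * t / (1 + t) ^ 2) (hdiff _ hs) hg
    (mul_four_mul_one_sub_div_one_add_pow_three hx) (div_nonneg (by linarith) (by linarith))
    hs.le (hpos _ hs) (hmono _ hs) (hconc _ hs)
  refine ⟨((hdiff _ hs).hasDerivAt.comp x hg).differentiableAt, hlo, hhi, hhi.trans_lt ?_⟩
  rw [div_lt_one (by linarith)]
  linarith
end
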